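/- arXiv:1804.04091 — 2 statements merged into one kernel-verified Lean document; each statement's English description precedes it below -/
import Mathlib

section
/- Let b : ℤ → Prop be a predicate of the form b(x) := b₀(x) ∧ (n ∣ (x + c)) where n > 0 and b₀ is a finite conjunction of literals of the form x ≥ e_i (e_i fixed integers). If b is satisfiable, then the least x satisfying b lies in the set {e + d | e ∈ {e_1,...,e_k}, d ∈ {0,...,n-1}}. -/
theorem stmt_8 (n c : ℤ) (hn : 0 < n) (k : ℕ) (e : Fin k → ℤ)
    (b : ℤ → Prop) (hb : ∀ x, b x ↔ ((∀ i, e i ≤ x) ∧ n ∣ (x + c)))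
    (hsat : ∃ x, b x) :
    ∀ y, b y → (∀ z < y, ¬ b z) →
      ∃ i : Fin k, ∃ d : ℤ, 0 ≤ d ∧ d < n ∧ y = e i + d := by
  intro y hy hmin
  rw [hb] at hy
  obtain ⟨h1, h2⟩ := hy
  obtain ⟨m, hm⟩ := h2
  rcases Nat.eq_zero_or_pos k with hk | hk
  · exfalso
    apply hmin (y - n) (by linarith)
    rw [hb]
    subst hk
    exact ⟨fun i => i.elim0, ⟨m - 1, by linarith⟩⟩
  · obtain ⟨i, -, hmax⟩ := Finset.exists_max_image Finset.univ e
      ⟨⟨0, hk⟩, Finset.mem_univ _⟩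
    refine ⟨i, y - e i, by linarith [h1 i], ?_, by ring⟩
    by_contra hd
    push_neg at hd
    apply hmin (y - n) (by linarith)
    rw [hb]
    exact ⟨fun j => by linarith [hmax j (Finset.mem_univ j)], ⟨m - 1, by linarith⟩⟩
end

section
/- Let f : ℤ → ℚ with f(x) ≥ 0 for all x, and suppose f is eventually left-periodic with period δ > 0 below threshold m. Let S = {x | b(x)} be the satisfying set of a predicate b that is also eventually left-periodic with period δ below m. If sup {f(x) | b(x)} is not attained at any x ≥ m - δ, then sup {f(x) | b(x)} = max over d ∈ {0,...,δ-1} of (if b(m - δ - d) then f(m - δ - d) else 0). -/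
open Classical in
theorem stmt_11 (f : ℤ → ℚ) (b : ℤ → Prop) (m : ℤ) (δ : ℤ) (hδ : 0 < δ)
    (hf0 : ∀ x, 0 ≤ f x)
    (hfper : ∀ x ≤ m, f x = f (x - δ))
    (hbper : ∀ x ≤ m, b x ↔ b (x - δ)) (M : ℚ)
    (hub : ∀ x, b x → f x ≤ M)
    (hatt : ∃ x, b x ∧ f x = M)
    (hnot : ¬ ∃ x, m - δ ≤ x ∧ b x ∧ f x = M) :
    (∃ d : ℤ, 0 ≤ d ∧ d < δ ∧ (if b (m - δ - d) then f (m - δ - d) else 0) = M) ∧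
    (∀ d : ℤ, 0 ≤ d → d < δ → (if b (m - δ - d) then f (m - δ - d) else 0) ≤ M) := by
  have key : ∀ n : ℕ, ∀ x : ℤ, b x → f x = M → (m - δ - x).toNat ≤ n →
      ∃ y, m - 2*δ < y ∧ y < m - δ ∧ b y ∧ f y = M := by
    intro n
    induction n with
    | zero =>
      intro x hbx hfx h
      exact absurd ⟨x, by omega, hbx, hfx⟩ hnot
    | succ n ih =>
      intro x hbx hfx h
      by_cases hge : m - δ ≤ x
      · exact absurd ⟨x, hge, hbx, hfx⟩ hnot
      by_cases hgt : m - 2*δ < x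
      · exact ⟨x, hgt, by omega, hbx, hfx⟩
      · -- shift up by δ
        have hx' : x + δ ≤ m := by omega
        have hf' : f (x + δ) = M := by
          have := hfper (x + δ) hx'
          simpa [hfx] using this
        have hb' : b (x + δ) := by
          have := hbper (x + δ) hx'
          simpa using this.mpr (by simpa using hbx)
        by_cases hge' : m - δ ≤ x + δ
        · exact absurd ⟨x + δ, hge', hb', hf'⟩ hnot
        · exact ih (x + δ) hb' hf' (by omega)
  have hM0 : (0:ℚ) ≤ M := by
    obtain ⟨x, hbx, hfx⟩ := hatt
    exact hfx ▸ hf0 x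
  constructor
  · obtain ⟨x, hbx, hfx⟩ := hatt
    obtain ⟨y, h1, h2, hby, hfy⟩ := key (m - δ - x).toNat x hbx hfx le_rfl
    refine ⟨m - δ - y, by omega, by omega, ?_⟩
    have : m - δ - (m - δ - y) = y := by ring
    rw [this, if_pos hby, hfy]
  · intro d _ _
    by_cases hb : b (m - δ - d)
    · rw [if_pos hb]; exact hub _ hb
    · rw [if_neg hb]; exact hM0
end
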